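/- arXiv:1201.4448 — 4 statements merged into one kernel-verified Lean document; each statement's English description precedes it below -/
import Mathlib

section
/- Let K be a field (of arbitrary characteristic), let d ≥ 1, and let f ∈ K[[x_1,…,x_d]] be a formal power series that is symmetric (invariant under every permutation of the variables x_1,…,x_d). Set g = f·∏_{1≤i<j≤d}(x_i − x_j) and write g = Σ_r α(r) x_1^{r_1}⋯x_d^{r_d}. Then for every n ≥ 0, the homogeneous component of g of total degree n + d(d−1)/2 equals Σ_λ α(λ+δ) · a_{λ+δ}, where the sum runs over all partitions λ = (λ_1 ≥ λ_2 ≥ … ≥ λ_d ≥ 0) with λ_1+…+λ_d = n, δ = (d−1, d−2, …, 1, 0), λ+δ = (λ_1+d−1, λ_2+d−2, …, λ_d), and a_μ denotes the alternant a_μ = Σ_{σ ∈ S_d} sign(σ) · x_{σ(1)}^{μ_1} x_{σ(2)}^{μ_2} ⋯ x_{σ(d)}^{μ_d}. (Equivalently: f = Σ_λ m(λ) S_λ where S_λ is the Schur function and m(λ) = α(λ+δ); this is Berele's lemma expressing the multiplicity series of f through the coefficients of g at strictly decreasing exponents.) -/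
/-!
Multiplying by the Vandermonde product `∏_{i<j} (x_i - x_j) = a_δ` turns the symmetric series `f`
into the antisymmetrization `g = ∑_σ sign σ · σ(f · x^δ)`. Hence `α(σ r) = sign σ · α(r)`, and
`α(r) = 0` as soon as two entries of `r` coincide (pair `σ` with `(i j) σ`; this works in every
characteristic). An exponent `r` with distinct entries is `σ(λ + δ)` for exactly one partition `λ`
and one permutation `σ`, so the right-hand side reduces to the single term
`sign σ · α(λ + δ) = α(r)`; when `r` has a repeated entry both sides vanish.
-/

open MvPowerSeries Finsupp Equiv Function

section Antisymmetrization

variable {ι α M : Type*} [Fintype ι] [DecidableEq ι] [Zero α] [AddCommGroup M]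

theorem sum_sign_smul_equivMapDomain_perm (B : (ι →₀ α) → M) (τ : Perm ι) (r : ι →₀ α) :
    ∑ σ : Perm ι, (Perm.sign σ : ℤ) • B (equivMapDomain σ.symm (equivMapDomain τ r)) =
      (Perm.sign τ : ℤ) • ∑ σ : Perm ι, (Perm.sign σ : ℤ) • B (equivMapDomain σ.symm r) := by
  rw [← Equiv.sum_comp (Equiv.mulLeft τ), Finset.smul_sum]
  refine Finset.sum_congr rfl fun σ _ => ?_
  have : equivMapDomain (τ * σ).symm (equivMapDomain τ r) = equivMapDomain σ.symm r := by
    ext i; simp [equivMapDomain_apply]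
  simp [this, smul_smul]

theorem sum_sign_smul_equivMapDomain_eq_zero (B : (ι →₀ α) → M) {r : ι →₀ α} {i j : ι}
    (hij : i ≠ j) (hr : r i = r j) :
    ∑ σ : Perm ι, (Perm.sign σ : ℤ) • B (equivMapDomain σ.symm r) = 0 := by
  have hswap : equivMapDomain (swap i j).symm r = r := by
    ext k; simp only [equivMapDomain_apply, symm_symm]
    rcases eq_or_ne k i with rfl | hki
    · simp [hr]
    rcases eq_or_ne k j with rfl | hkj
    · simp [hr]
    · rw [swap_apply_of_ne_of_ne hki hkj]
  refine Finset.sum_ninvolution (swap i j * ·) (fun σ => ?_) (fun σ _ h => ?_)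
    (fun _ => Finset.mem_univ _) (fun σ => swap_mul_self_mul i j σ)
  · have : equivMapDomain (swap i j * σ).symm r = equivMapDomain σ.symm r := by
      rw [Perm.mul_def, symm_trans, equivMapDomain_trans, hswap]
    simp [this, Perm.sign_swap hij]
  · exact hij (by simpa using (congrArg (· (σ⁻¹ i)) h).symm)

end Antisymmetrization

theorem prod_filter_lt_eq_prod_prod_Ioi {α M : Type*} [Fintype α] [LinearOrder α]
    [LocallyFiniteOrderTop α] [CommMonoid M] (F : α → α → M) :
    ∏ p ∈ Finset.univ.filter (fun p : α × α => p.1 < p.2), F p.1 p.2 =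
      ∏ i, ∏ j ∈ Finset.Ioi i, F i j := by
  rw [Finset.prod_filter, Fintype.prod_prod_type]
  simp_rw [← Finset.prod_filter, Finset.filter_lt_eq_Ioi]

namespace MvPowerSeries

variable {ι R : Type*} [Fintype ι] [DecidableEq ι] [CommRing R]

variable (R) in
noncomputable def alternant (μ : ι → ℕ) : MvPowerSeries ι R :=
  ∑ σ : Perm ι, (Perm.sign σ : ℤ) • ∏ k, X (σ k) ^ μ k

theorem prod_X_perm_pow (σ : Perm ι) (μ : ι → ℕ) :
    ∏ k, (X (σ k) : MvPowerSeries ι R) ^ μ k =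
      monomial (equivMapDomain σ (equivFunOnFinite.symm μ)) 1 := by
  simp_rw [X_pow_eq]
  rw [prod_monomial, Finset.prod_const_one]
  congr 2
  ext i
  simp [Finsupp.finsetSum_apply, single_apply, ← eq_symm_apply]

theorem coeff_alternant (μ : ι → ℕ) (r : ι →₀ ℕ) :
    coeff r (alternant R μ) = ∑ σ : Perm ι, (Perm.sign σ : ℤ) •
      if equivMapDomain σ (equivFunOnFinite.symm μ) = r then (1 : R) else 0 := by
  simp only [alternant, prod_X_perm_pow, map_sum, map_zsmul, coeff_monomial]
  simp_rw [eq_comm]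

theorem coeff_mul_alternant {f : MvPowerSeries ι R}
    (hf : ∀ (σ : Perm ι) (r : ι →₀ ℕ), coeff (equivMapDomain σ r) f = coeff r f)
    (μ : ι → ℕ) (r : ι →₀ ℕ) :
    coeff r (f * alternant R μ) = ∑ σ : Perm ι, (Perm.sign σ : ℤ) •
      coeff (equivMapDomain σ.symm r) (f * monomial (equivFunOnFinite.symm μ) 1) := by
  simp only [alternant, prod_X_perm_pow, Finset.mul_sum, mul_smul_comm, map_sum, map_zsmul,
    coeff_mul_monomial]
  refine Finset.sum_congr rfl fun σ _ => ?_
  have hle : equivMapDomain σ (equivFunOnFinite.symm μ) ≤ r ↔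
      equivFunOnFinite.symm μ ≤ equivMapDomain σ.symm r :=
    ⟨fun h i => by simpa using h (σ i), fun h i => by simpa using h (σ.symm i)⟩
  have hsub : r - equivMapDomain σ (equivFunOnFinite.symm μ) =
      equivMapDomain σ (equivMapDomain σ.symm r - equivFunOnFinite.symm μ) := by
    ext i; simp [equivMapDomain_apply]
  simp only [hle, hsub, hf]

theorem coeff_equivMapDomain_mul_alternant {f : MvPowerSeries ι R}
    (hf : ∀ (σ : Perm ι) (r : ι →₀ ℕ), coeff (equivMapDomain σ r) f = coeff r f)
    (μ : ι → ℕ) (τ : Perm ι) (r : ι →₀ ℕ) :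
    coeff (equivMapDomain τ r) (f * alternant R μ) =
      (Perm.sign τ : ℤ) • coeff r (f * alternant R μ) := by
  simp only [coeff_mul_alternant hf]
  exact sum_sign_smul_equivMapDomain_perm
    (fun s => coeff s (f * monomial (equivFunOnFinite.symm μ) 1)) τ r

theorem coeff_mul_alternant_eq_zero {f : MvPowerSeries ι R}
    (hf : ∀ (σ : Perm ι) (r : ι →₀ ℕ), coeff (equivMapDomain σ r) f = coeff r f)
    (μ : ι → ℕ) {r : ι →₀ ℕ} {i j : ι} (hij : i ≠ j) (hr : r i = r j) :
    coeff r (f * alternant R μ) = 0 := by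
  rw [coeff_mul_alternant hf]
  exact sum_sign_smul_equivMapDomain_eq_zero
    (fun s => coeff s (f * monomial (equivFunOnFinite.symm μ) 1)) hij hr

theorem coeff_mul_coeff_alternant {g : MvPowerSeries ι R}
    (hg : ∀ (σ : Perm ι) (r : ι →₀ ℕ),
      coeff (equivMapDomain σ r) g = (Perm.sign σ : ℤ) • coeff r g)
    (μ : ι → ℕ) (r : ι →₀ ℕ) :
    coeff (equivFunOnFinite.symm μ) g * coeff r (alternant R μ) =
      ∑ σ : Perm ι, if equivMapDomain σ (equivFunOnFinite.symm μ) = r then coeff r g else 0 := by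
  rw [coeff_alternant, Finset.mul_sum]
  refine Finset.sum_congr rfl fun σ _ => ?_
  split_ifs with h
  · rw [← h, hg, mul_smul_comm, mul_one]
  · simp

theorem alternant_eq_det (μ : ι → ℕ) :
    alternant R μ = Matrix.det (Matrix.of fun i k => (X i : MvPowerSeries ι R) ^ μ k) := by
  simp [alternant, Matrix.det_apply, Units.smul_def]

theorem prod_X_sub_X_eq_alternant (d : ℕ) :
    ∏ p ∈ Finset.univ.filter (fun p : Fin d × Fin d => p.1 < p.2),
        ((X p.1 : MvPowerSeries (Fin d) R) - X p.2) =
      alternant R (fun k : Fin d => d - 1 - k) := by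
  have hrev : Matrix.of (fun i k : Fin d => (X i : MvPowerSeries (Fin d) R) ^ (d - 1 - (k : ℕ))) =
      (Matrix.vandermonde fun i => X (Fin.rev i)).submatrix Fin.revPerm Fin.revPerm := by
    ext i k : 1
    simp only [Matrix.of_apply, Matrix.submatrix_apply, Matrix.vandermonde_apply,
      Fin.revPerm_apply, Fin.rev_rev, Fin.val_rev]
    congr 1
    omega
  rw [alternant_eq_det, hrev, Matrix.det_submatrix_equiv_self, Matrix.det_vandermonde,
    ← prod_filter_lt_eq_prod_prod_Ioi fun i j =>
      (X (Fin.rev j) : MvPowerSeries (Fin d) R) - X (Fin.rev i)]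
  exact Finset.prod_nbij' (fun p => (p.2.rev, p.1.rev)) (fun p => (p.2.rev, p.1.rev))
    (by simp) (by simp) (by simp) (by simp) (by simp)

end MvPowerSeries

theorem StrictAnti.antitone_val_add {d : ℕ} {μ : Fin d → ℕ} (hμ : StrictAnti μ) :
    Antitone fun k : Fin d => (k : ℕ) + μ k := by
  intro i j hij
  have h := Finset.card_le_card_of_injOn μ (s := Finset.Icc i j) (t := Finset.Icc (μ j) (μ i))
    (fun k hk => by
      obtain ⟨hik, hkj⟩ := Finset.mem_Icc.1 hk
      exact Finset.mem_Icc.2 ⟨hμ.antitone hkj, hμ.antitone hik⟩)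
    hμ.injective.injOn
  have := hμ.antitone hij
  rw [Fin.card_Icc, Nat.card_Icc] at h
  dsimp only
  omega

theorem Tuple.exists_perm_strictAnti_comp {d : ℕ} {α : Type*} [LinearOrder α] {r : Fin d → α}
    (hr : Injective r) : ∃ σ : Perm (Fin d), StrictAnti (r ∘ σ) :=
  ⟨Fin.revPerm.trans (Tuple.sort r),
    ((Tuple.monotone_sort r).comp_antitone fun _ _ => Fin.rev_le_rev.2).strictAnti_of_injective
      (hr.comp (Fin.revPerm.trans (Tuple.sort r)).injective)⟩

theorem Fin.sum_sub_one_sub_val (d : ℕ) : ∑ k : Fin d, (d - 1 - (k : ℕ)) = d * (d - 1) / 2 := by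
  rw [Fin.sum_univ_eq_sum_range (fun k => d - 1 - k) d,
    Finset.sum_range_reflect (fun i => i) d, Finset.sum_range_id]

theorem equivMapDomain_equivFunOnFinite_symm_eq_iff {ι : Type*} [Finite ι] (σ : Perm ι)
    (μ : ι → ℕ) (r : ι →₀ ℕ) :
    equivMapDomain σ (equivFunOnFinite.symm μ) = r ↔ μ = r ∘ σ := by
  simp only [Finsupp.ext_iff, funext_iff, equivMapDomain_apply, equivFunOnFinite_symm_apply_apply,
    comp_apply]
  exact ⟨fun h k => by simpa using h (σ k), fun h k => by simpa using h (σ.symm k)⟩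

def partitionTuples (d n : ℕ) : Finset (Fin d → ℕ) :=
  (Fintype.piFinset fun _ : Fin d => Finset.range (n + 1)).filter
    (fun l : Fin d → ℕ => (∀ i j : Fin d, i ≤ j → l j ≤ l i) ∧ ∑ i, l i = n)

theorem mem_partitionTuples {d n : ℕ} {l : Fin d → ℕ} :
    l ∈ partitionTuples d n ↔ Antitone l ∧ ∑ i, l i = n := by
  refine ⟨fun h => (Finset.mem_filter.1 h).2, fun ⟨hl, hsum⟩ => Finset.mem_filter.2 ⟨?_, hl, hsum⟩⟩
  refine Fintype.mem_piFinset.2 fun i => Finset.mem_range.2 (Nat.lt_succ_of_le ?_)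
  exact hsum ▸ Finset.single_le_sum (fun _ _ => Nat.zero_le _) (Finset.mem_univ i)

theorem existsUnique_partitionTuples_perm {d n : ℕ} {r : Fin d →₀ ℕ} (hr : Injective r)
    (hsum : ∑ i, r i = n + d * (d - 1) / 2) :
    ∃! p : (Fin d → ℕ) × Perm (Fin d), p.1 ∈ partitionTuples d n ∧
      equivMapDomain p.2 (equivFunOnFinite.symm fun k => p.1 k + (d - 1 - (k : ℕ))) = r := by
  have hδ : StrictAnti fun k : Fin d => d - 1 - (k : ℕ) := fun i j hij => by
    have : (i : ℕ) < j := hij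
    have := j.isLt
    dsimp only
    omega
  obtain ⟨σ, hσ⟩ := Tuple.exists_perm_strictAnti_comp hr
  have hδle : ∀ k : Fin d, d - 1 - (k : ℕ) ≤ r (σ k) := fun k => by
    have hk := k.isLt
    have := hσ.antitone_val_add (a := k) (b := ⟨d - 1, by omega⟩) (Fin.le_def.2 (by dsimp; omega))
    simp only [comp_apply] at this
    omega
  refine ⟨(fun k => r (σ k) - (d - 1 - k), σ), ⟨mem_partitionTuples.2 ⟨?_, ?_⟩, ?_⟩, ?_⟩
  · intro i j hij
    have hgap := hσ.antitone_val_add hij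
    have hj := hδle j
    have : (i : ℕ) ≤ j := hij
    simp only [comp_apply] at hgap
    dsimp only
    omega
  · rw [Finset.sum_tsub_distrib _ fun k _ => hδle k, Equiv.sum_comp σ (fun i => r i), hsum,
      Fin.sum_sub_one_sub_val, Nat.add_sub_cancel]
  · rw [equivMapDomain_equivFunOnFinite_symm_eq_iff]
    funext k
    exact Nat.sub_add_cancel (hδle k)
  · rintro ⟨l, τ⟩ ⟨hl, hτ⟩
    rw [equivMapDomain_equivFunOnFinite_symm_eq_iff] at hτ
    have hτσ : τ = σ := by
      have h := Tuple.unique_antitone (hτ ▸ (mem_partitionTuples.1 hl).1.add_strictAnti hδ).antitone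
        hσ.antitone
      exact Equiv.ext fun k => hr (congrFun h k)
    subst hτσ
    refine Prod.ext (funext fun k => ?_) rfl
    have := congrFun hτ k
    simp only [comp_apply] at this ⊢
    omega

theorem berele_lemma_general (K : Type*) [Field K] (d : ℕ)
    (f : MvPowerSeries (Fin d) K)
    (hf : ∀ (σ : Equiv.Perm (Fin d)) (r : Fin d →₀ ℕ),
      MvPowerSeries.coeff (Finsupp.equivMapDomain σ r) f = MvPowerSeries.coeff r f)
    (g : MvPowerSeries (Fin d) K)
    (hg : g = f * ∏ p ∈ Finset.univ.filter (fun p : Fin d × Fin d => p.1 < p.2),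
      (MvPowerSeries.X p.1 - MvPowerSeries.X p.2))
    (n : ℕ) (r : Fin d →₀ ℕ) (hr : ∑ i, r i = n + d * (d - 1) / 2) :
    MvPowerSeries.coeff r g =
      ∑ l ∈ (Fintype.piFinset fun _ : Fin d => Finset.range (n + 1)).filter
          (fun l : Fin d → ℕ => (∀ i j : Fin d, i ≤ j → l j ≤ l i) ∧ ∑ i, l i = n),
        (MvPowerSeries.coeff
            (Finsupp.equivFunOnFinite.symm (fun i : Fin d => l i + (d - 1 - (i : ℕ)))) g) *
          MvPowerSeries.coeff r
            (∑ σ : Equiv.Perm (Fin d), (Equiv.Perm.sign σ : ℤ) •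
              ∏ k : Fin d, MvPowerSeries.X (σ k) ^ (l k + (d - 1 - (k : ℕ)))) := by
  rw [prod_X_sub_X_eq_alternant] at hg
  subst hg
  have hskew := coeff_equivMapDomain_mul_alternant hf fun k : Fin d => d - 1 - (k : ℕ)
  calc coeff r (f * alternant K fun k : Fin d => d - 1 - (k : ℕ))
      = ∑ l ∈ partitionTuples d n, ∑ σ : Perm (Fin d),
          if equivMapDomain σ (equivFunOnFinite.symm fun k => l k + (d - 1 - (k : ℕ))) = r
          then coeff r (f * alternant K fun k : Fin d => d - 1 - (k : ℕ)) else 0 := ?_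
    _ = _ := Finset.sum_congr rfl fun l _ => (coeff_mul_coeff_alternant hskew _ r).symm
  by_cases hinj : Injective r
  · obtain ⟨⟨l₀, σ₀⟩, ⟨hl₀, h₀⟩, huniq⟩ := existsUnique_partitionTuples_perm hinj hr
    rw [← Finset.sum_product', Finset.sum_eq_single_of_mem (l₀, σ₀) (by simpa using hl₀),
      if_pos h₀]
    intro p hp hne
    exact if_neg fun h => hne (huniq p ⟨(Finset.mem_product.1 hp).1, h⟩)
  · obtain ⟨i, j, hr_eq, hij⟩ := not_injective_iff.1 hinj
    simp [coeff_mul_alternant_eq_zero hf _ hij hr_eq]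

/-- **Berele's lemma** (Lemma 1 of the paper). Let `K` be a field of arbitrary
characteristic, `d ≥ 1`, and let `f ∈ K[[x_1,…,x_d]]` be a symmetric formal power
series.  Set `g = f · ∏_{i<j} (x_i − x_j)` and write `g = Σ_r α(r) x^r`.  Then for
every `n ≥ 0` the homogeneous component of `g` of total degree `n + d(d−1)/2`
(expressed coefficientwise) equals `Σ_λ α(λ+δ) · a_{λ+δ}`, the sum over all
partitions `λ = (λ_1 ≥ … ≥ λ_d ≥ 0)` of `n`, where `δ = (d−1, d−2, …, 1, 0)` and
`a_μ = Σ_{σ ∈ S_d} sign(σ) x_{σ(1)}^{μ_1} ⋯ x_{σ(d)}^{μ_d}` is the alternant. -/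
theorem berele_lemma (K : Type*) [Field K] (d : ℕ) (hd : 1 ≤ d)
    (f : MvPowerSeries (Fin d) K)
    (hf : ∀ (σ : Equiv.Perm (Fin d)) (r : Fin d →₀ ℕ),
      MvPowerSeries.coeff (Finsupp.equivMapDomain σ r) f = MvPowerSeries.coeff r f)
    (g : MvPowerSeries (Fin d) K)
    (hg : g = f * ∏ p ∈ Finset.univ.filter (fun p : Fin d × Fin d => p.1 < p.2),
      (MvPowerSeries.X p.1 - MvPowerSeries.X p.2))
    (n : ℕ) (r : Fin d →₀ ℕ) (hr : ∑ i, r i = n + d * (d - 1) / 2) :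
    MvPowerSeries.coeff r g =
      ∑ l ∈ (Fintype.piFinset fun _ : Fin d => Finset.range (n + 1)).filter
          (fun l : Fin d → ℕ => (∀ i j : Fin d, i ≤ j → l j ≤ l i) ∧ ∑ i, l i = n),
        (MvPowerSeries.coeff
            (Finsupp.equivFunOnFinite.symm (fun i : Fin d => l i + (d - 1 - (i : ℕ)))) g) *
          MvPowerSeries.coeff r
            (∑ σ : Equiv.Perm (Fin d), (Equiv.Perm.sign σ : ℤ) •
              ∏ k : Fin d, MvPowerSeries.X (σ k) ^ (l k + (d - 1 - (k : ℕ)))) :=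
  berele_lemma_general K d f hf g hg n r hr
end

section
/- In the field ℚ(x_1,x_2) of rational functions in two variables over ℚ, the following identity holds: (x_1 − x_2)·1/((1−x_1^3)(1−x_1^2x_2)(1−x_1x_2^2)(1−x_2^3)) = x_1·h(x_1, x_1x_2) − x_2·h(x_2, x_1x_2), where h(v_1,v_2) = (1 − v_1v_2 + v_1^2v_2^2)/((1−v_1^3)(1−v_1v_2)(1−v_2^6)). (This expresses that h is the multiplicity series M' of the Hilbert series of the symmetric algebra K[W(3)] of the irreducible GL_2-module W(3), i.e., of ∏_{a+b=3}(1−x_1^a x_2^b)^{-1}.) -/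
/-- The candidate multiplicity series `M'(H(K[W(3)]); v₁, v₂)`. -/
noncomputable def multSeriesW3 (v1 v2 : FractionRing (MvPolynomial (Fin 2) ℚ)) :
    FractionRing (MvPolynomial (Fin 2) ℚ) :=
  (1 - v1 * v2 + v1 ^ 2 * v2 ^ 2) / ((1 - v1 ^ 3) * (1 - v1 * v2) * (1 - v2 ^ 6))

/-!
Every denominator occurring is `1 - m` for a non-constant monomial `m`, which is nonzero in
`ℚ(x₁,x₂)` because its constant coefficient is `1`; once the denominators are cleared, the
identity is a polynomial identity.
-/

open MvPolynomial

theorem one_sub_algebraMap_ne_zero {σ R : Type*} [CommRing R] [IsDomain R]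
    {p : MvPolynomial σ R} (hp : constantCoeff p = 0) :
    (1 : FractionRing (MvPolynomial σ R)) - algebraMap _ _ p ≠ 0 := by
  rw [← map_one (algebraMap (MvPolynomial σ R) (FractionRing (MvPolynomial σ R))), ← map_sub,
    Ne, IsFractionRing.to_map_eq_zero_iff]
  intro h
  simpa [hp] using congrArg constantCoeff h

theorem multSeriesW3_identity (x y : FractionRing (MvPolynomial (Fin 2) ℚ))
    (hx : 1 - x ^ 3 ≠ 0) (hxxy : 1 - x ^ 2 * y ≠ 0) (hxyy : 1 - x * y ^ 2 ≠ 0)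
    (hy : 1 - y ^ 3 ≠ 0) (hxy : 1 - x ^ 6 * y ^ 6 ≠ 0) :
    (x - y) * (1 / ((1 - x ^ 3) * (1 - x ^ 2 * y) * (1 - x * y ^ 2) * (1 - y ^ 3))) =
      x * multSeriesW3 x (x * y) - y * multSeriesW3 y (x * y) := by
  unfold multSeriesW3
  field_simp
  ring

/-- In `ℚ(x₁,x₂)` one has
`(x₁ − x₂)/((1−x₁³)(1−x₁²x₂)(1−x₁x₂²)(1−x₂³)) = x₁·h(x₁,x₁x₂) − x₂·h(x₂,x₁x₂)`
with `h(v₁,v₂) = (1 − v₁v₂ + v₁²v₂²)/((1−v₁³)(1−v₁v₂)(1−v₂⁶))`, i.e. `h` is the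
multiplicity series of the Hilbert series of the symmetric algebra `K[W(3)]`. -/
theorem multiplicity_series_KW3
    (x1 x2 : FractionRing (MvPolynomial (Fin 2) ℚ))
    (hx1 : x1 = algebraMap (MvPolynomial (Fin 2) ℚ) _ (MvPolynomial.X 0))
    (hx2 : x2 = algebraMap (MvPolynomial (Fin 2) ℚ) _ (MvPolynomial.X 1)) :
    (x1 - x2) *
        (1 / ((1 - x1 ^ 3) * (1 - x1 ^ 2 * x2) * (1 - x1 * x2 ^ 2) * (1 - x2 ^ 3))) =
      x1 * multSeriesW3 x1 (x1 * x2) - x2 * multSeriesW3 x2 (x1 * x2) := by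
  subst hx1 hx2
  apply multSeriesW3_identity <;>
    simp only [← map_pow, ← map_mul] <;> exact one_sub_algebraMap_ne_zero (by simp)
end

section
/- Let d ≥ 1 and let SL_d(ℚ) act on the space Sym_d(ℚ) of symmetric d×d rational matrices by A ↦ g^T A g, with the induced action (g·F)(A) = F(g^T A g) on the polynomial algebra ℚ[a_{ij} : 1 ≤ i ≤ j ≤ d] of polynomial functions on Sym_d(ℚ). Then for every n ≥ 0, the ℚ-vector space of homogeneous polynomial functions F of degree n satisfying F(g^T A g) = F(A) for all g ∈ SL_d(ℚ) has dimension 1 if d divides n, and dimension 0 otherwise. Equivalently, the Hilbert series of the algebra of SL_d-invariants of the symmetric algebra K[W(2)] of the space of quadratic forms in d variables equals 1/(1 − t^d). -/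
/-!
Over a field of characteristic zero every symmetric matrix is `SL_d`-congruent to a diagonal
one, so an invariant `F` is determined by its restriction `q(x) = F(diag x)` to diagonal
matrices. Congruence by a diagonal `g = diag t` with `∏ t = 1` rescales `x_k` by `t_k²`, and
comparing coefficients shows that every monomial of `q` is a power `(x₁ ⋯ x_d)^m`. For `F`
homogeneous of degree `n` this forces `n = d m`, so the invariants of degree `n` vanish unless
`d ∣ n` and otherwise embed into the line spanned by that monomial; the power `det^m` of the
generic symmetric determinant is a nonzero invariant of degree `d m`.
-/

open Matrix

/-- Index set for the entries `a_{ij}`, `1 ≤ i ≤ j ≤ d`, of a symmetric matrix. -/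
abbrev SymIdx (d : ℕ) : Type := {p : Fin d × Fin d // p.1 ≤ p.2}

open MvPolynomial

namespace Matrix

variable {ι K : Type*} [Fintype ι] [DecidableEq ι] [Field K]

theorem IsSymm.isSymm_toLinearMap₂' {A : Matrix ι ι K} (hA : A.IsSymm) :
    (Matrix.toLinearMap₂' K A).IsSymm := by
  refine LinearMap.isSymm_def.mpr fun v w => ?_
  rw [RingHom.id_apply, Matrix.toLinearMap₂'_apply', Matrix.toLinearMap₂'_apply', dotProduct_comm,
    dotProduct_mulVec, ← vecMul_transpose, hA.eq]

theorem exists_isUnit_det_transpose_mul_mul_eq_diagonal [Invertible (2 : K)]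
    {A : Matrix ι ι K} (hA : A.IsSymm) :
    ∃ P : Matrix ι ι K, IsUnit P.det ∧ ∃ x : ι → K, Pᵀ * A * P = diagonal x := by
  obtain ⟨v, hv⟩ := LinearMap.BilinForm.exists_orthogonal_basis hA.isSymm_toLinearMap₂'
  let b := v.reindex (Fintype.equivFinOfCardEq (Module.finrank_fintype_fun_eq_card K).symm).symm
  have hb : ((Pi.basisFun K ι).toMatrix b)ᵀ * A * (Pi.basisFun K ι).toMatrix b =
      LinearMap.toMatrix₂ b b (Matrix.toLinearMap₂' K A) := by
    rw [← LinearMap.toMatrix₂_mul_basis_toMatrix (Pi.basisFun K ι) (Pi.basisFun K ι),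
      LinearMap.toMatrix₂_basisFun, LinearMap.toMatrix'_toLinearMap₂']
  refine ⟨_, (Pi.basisFun K ι).isUnit_det b, _, hb.trans (IsDiag.diagonal_diag ?_).symm⟩
  intro i j hij
  simp only [LinearMap.toMatrix₂_apply, b, Module.Basis.reindex_apply]
  exact hv (by simpa using hij)

theorem exists_specialLinearGroup_transpose_mul_mul_eq_diagonal [Invertible (2 : K)]
    {A : Matrix ι ι K} (hA : A.IsSymm) :
    ∃ (g : SpecialLinearGroup ι K) (x : ι → K), (g : Matrix ι ι K)ᵀ * A * g = diagonal x := by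
  obtain ⟨P, hP, x, hPAP⟩ := exists_isUnit_det_transpose_mul_mul_eq_diagonal hA
  cases isEmpty_or_nonempty ι with
  | inl _ => exact ⟨1, 0, Subsingleton.elim _ _⟩
  | inr hι =>
    obtain ⟨i₀⟩ := hι
    -- rescaling the `i₀`-th column of `P` by `(det P)⁻¹` lands in `SL` and keeps `Pᵀ A P` diagonal
    let e : ι → K := Function.update 1 i₀ (P.det)⁻¹
    have he : (diagonal e).det = (P.det)⁻¹ := by
      simp [e, det_diagonal, Finset.prod_update_of_mem (Finset.mem_univ i₀)]
    refine ⟨⟨P * diagonal e, by rw [det_mul, he, mul_inv_cancel₀ hP.ne_zero]⟩, e * x * e, ?_⟩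
    rw [SpecialLinearGroup.coe_mk, transpose_mul, diagonal_transpose,
      show e * x * e = fun i => e i * x i * e i from rfl, ← diagonal_mul_diagonal,
      ← diagonal_mul_diagonal, ← hPAP]
    simp only [Matrix.mul_assoc]

end Matrix

namespace MvPolynomial

variable {σ R : Type*}

theorem coeff_aeval_C_mul_X [CommSemiring R] (c : σ → R) (p : MvPolynomial σ R)
    (α : σ →₀ ℕ) :
    coeff α (aeval (fun i => C (c i) * X i) p) = α.prod (fun i k => c i ^ k) * coeff α p := by
  induction p using MvPolynomial.induction_on' with
  | monomial β r =>
    classical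
    have : aeval (fun i => C (c i) * X i) (monomial β r) =
        monomial β (r * β.prod fun i k => c i ^ k) := by
      rw [aeval_monomial]
      simp only [mul_pow, Finsupp.prod_mul, ← map_pow, ← map_finsuppProd]
      rw [monomial_eq, algebraMap_eq, C_mul]
      ring
    rw [this, coeff_monomial, coeff_monomial]
    split_ifs with h
    · rw [h, mul_comm]
    · rw [mul_zero]
  | add p q hp hq => rw [map_add, coeff_add, coeff_add, hp, hq, mul_add]

theorem IsHomogeneous.det [CommRing R] {ι : Type*} [Fintype ι] [DecidableEq ι]
    {M : Matrix ι ι (MvPolynomial σ R)} (hM : ∀ i j, (M i j).IsHomogeneous 1) :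
    M.det.IsHomogeneous (Fintype.card ι) := by
  rw [det_apply']
  refine IsHomogeneous.sum _ _ _ fun τ _ => ?_
  have := (isHomogeneous_C σ ((Equiv.Perm.sign τ : ℤ) : R)).mul
    (IsHomogeneous.prod Finset.univ _ (fun _ => 1) fun i _ => hM (τ i) i)
  rwa [Finset.sum_const, smul_eq_mul, mul_one, zero_add, Finset.card_univ, map_intCast] at this

end MvPolynomial

section SymmetricEntries

variable {R S : Type*} {d : ℕ}

def symEntries (A : Matrix (Fin d) (Fin d) R) : SymIdx d → R := fun p => A p.1.1 p.1.2

def ofSymEntries (v : SymIdx d → R) : Matrix (Fin d) (Fin d) R :=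
  Matrix.of fun i j => if h : i ≤ j then v ⟨(i, j), h⟩ else v ⟨(j, i), le_of_not_ge h⟩

theorem symEntries_ofSymEntries (v : SymIdx d → R) : symEntries (ofSymEntries v) = v :=
  funext fun p => dif_pos p.2

theorem isSymm_ofSymEntries (v : SymIdx d → R) : (ofSymEntries v).IsSymm := by
  ext i j
  rcases lt_trichotomy i j with h | rfl | h
  · simp [ofSymEntries, h.le, h.not_ge]
  · rfl
  · simp [ofSymEntries, h.le, h.not_ge]

theorem ofSymEntries_symEntries {A : Matrix (Fin d) (Fin d) R} (hA : A.IsSymm) :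
    ofSymEntries (symEntries A) = A := by
  ext i j
  by_cases h : i ≤ j
  · simp [ofSymEntries, symEntries, h]
  · simp [ofSymEntries, symEntries, h, hA.apply i j]

theorem map_ofSymEntries (f : R → S) (v : SymIdx d → R) :
    (ofSymEntries v).map f = ofSymEntries (f ∘ v) := by
  ext i j
  by_cases h : i ≤ j <;> simp [ofSymEntries, h]

end SymmetricEntries

section DiagonalRestriction

variable {R : Type*} [CommSemiring R] {d : ℕ}

variable (R d) in
noncomputable def diagRestrict : MvPolynomial (SymIdx d) R →ₐ[R] MvPolynomial (Fin d) R :=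
  aeval fun p => if p.1.1 = p.1.2 then X p.1.1 else 0

theorem aeval_diagRestrict (x : Fin d → R) (F : MvPolynomial (SymIdx d) R) :
    aeval x (diagRestrict R d F) = aeval (symEntries (diagonal x)) F := by
  rw [diagRestrict, comp_aeval_apply]
  congr 2 with p
  simp [symEntries, diagonal_apply, apply_ite (aeval x)]

protected theorem MvPolynomial.IsHomogeneous.diagRestrict {F : MvPolynomial (SymIdx d) R}
    {n : ℕ} (hF : F.IsHomogeneous n) : (_root_.diagRestrict R d F).IsHomogeneous n := by
  have := hF.aeval (n := 1)
    (fun p : SymIdx d => if p.1.1 = p.1.2 then (X p.1.1 : MvPolynomial (Fin d) R) else 0)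
    fun p => by
      split_ifs
      exacts [isHomogeneous_X _ _, isHomogeneous_zero _ _ _]
  rwa [one_mul] at this

end DiagonalRestriction

section Invariants

variable {R : Type*} [CommRing R] {d : ℕ}

variable (R d) in
noncomputable def slInvariants : Submodule R (MvPolynomial (SymIdx d) R) :=
  ⨅ (g : SpecialLinearGroup (Fin d) R) (A : Matrix (Fin d) (Fin d) R) (_ : A.IsSymm),
    LinearMap.ker
      ((aeval (symEntries ((g : Matrix (Fin d) (Fin d) R)ᵀ * A * (g : Matrix (Fin d) (Fin d) R)))
        ).toLinearMap - (aeval (symEntries A)).toLinearMap)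

theorem mem_slInvariants {F : MvPolynomial (SymIdx d) R} :
    F ∈ slInvariants R d ↔ ∀ (g : SpecialLinearGroup (Fin d) R) (A : Matrix (Fin d) (Fin d) R),
      A.IsSymm → aeval (symEntries ((g : Matrix (Fin d) (Fin d) R)ᵀ * A *
        (g : Matrix (Fin d) (Fin d) R))) F =
        aeval (symEntries A) F := by
  simp [slInvariants, sub_eq_zero]

theorem pow_mem_slInvariants {F : MvPolynomial (SymIdx d) R} (hF : F ∈ slInvariants R d)
    (m : ℕ) : F ^ m ∈ slInvariants R d :=
  mem_slInvariants.mpr fun g A hA => by rw [map_pow, map_pow, mem_slInvariants.mp hF g A hA]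

theorem aeval_diagRestrict_sq_mul {F : MvPolynomial (SymIdx d) R} (hF : F ∈ slInvariants R d)
    {t : Fin d → R} (ht : ∏ k, t k = 1) (x : Fin d → R) :
    aeval (t ^ 2 * x) (diagRestrict R d F) = aeval x (diagRestrict R d F) := by
  have := mem_slInvariants.mp hF ⟨diagonal t, by rwa [det_diagonal]⟩ _ (isSymm_diagonal x)
  rw [aeval_diagRestrict, aeval_diagRestrict, ← this]
  change _ = aeval (symEntries ((diagonal t)ᵀ * diagonal x * diagonal t)) F
  rw [diagonal_transpose, diagonal_mul_diagonal, diagonal_mul_diagonal]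
  congr 4 with k
  rw [Pi.mul_apply, Pi.pow_apply]
  ring

variable (R d) in
noncomputable def symDet : MvPolynomial (SymIdx d) R := (ofSymEntries X).det

theorem aeval_symDet {S : Type*} [CommRing S] [Algebra R S] (v : SymIdx d → S) :
    aeval v (symDet R d) = (ofSymEntries v).det := by
  rw [symDet, AlgHom.map_det, AlgHom.mapMatrix_apply, map_ofSymEntries]
  congr with p
  exact aeval_X v p

variable (R d) in
theorem isHomogeneous_symDet : (symDet R d).IsHomogeneous d := by
  have := IsHomogeneous.det (M := (ofSymEntries X : Matrix _ _ (MvPolynomial (SymIdx d) R)))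
    fun i j => by by_cases h : i ≤ j <;> simp [ofSymEntries, h, isHomogeneous_X]
  rwa [Fintype.card_fin] at this

variable (R d) in
theorem symDet_mem_slInvariants : symDet R d ∈ slInvariants R d := by
  refine mem_slInvariants.mpr fun g A hA => ?_
  have hgAg : ((g : Matrix (Fin d) (Fin d) R)ᵀ * A * g).IsSymm := by
    simp [IsSymm, Matrix.mul_assoc, hA.eq]
  rw [aeval_symDet, aeval_symDet, ofSymEntries_symEntries hA, ofSymEntries_symEntries hgAg,
    det_mul, det_mul, det_transpose, Matrix.SpecialLinearGroup.det_coe, one_mul, mul_one]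

end Invariants

section CharZero

variable {K : Type*} [Field K] [CharZero K] {d n : ℕ} {F : MvPolynomial (SymIdx d) K}

theorem eq_zero_of_diagRestrict_eq_zero (hF : F ∈ slInvariants K d)
    (h : diagRestrict K d F = 0) : F = 0 := by
  have := invertibleOfNonzero (two_ne_zero' K)
  refine MvPolynomial.funext fun v => ?_
  obtain ⟨g, x, hgx⟩ :=
    exists_specialLinearGroup_transpose_mul_mul_eq_diagonal (isSymm_ofSymEntries v)
  have := mem_slInvariants.mp hF g _ (isSymm_ofSymEntries v)
  rw [hgx, symEntries_ofSymEntries, ← aeval_diagRestrict, h] at this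
  rw [map_zero, ← aeval_eq_eval]
  exact this.symm.trans (map_zero _)

theorem prod_pow_eq_one_of_mem_support_diagRestrict (hF : F ∈ slInvariants K d)
    {α : Fin d →₀ ℕ} (hα : α ∈ (diagRestrict K d F).support) {t : Fin d → K}
    (ht : ∏ k, t k = 1) : ∏ k, t k ^ (2 * α k) = 1 := by
  have hpoly : aeval (fun k => C (t k ^ 2) * X k) (diagRestrict K d F) = diagRestrict K d F := by
    refine MvPolynomial.funext fun x => ?_
    rw [← aeval_eq_eval, comp_aeval_apply, ← aeval_diagRestrict_sq_mul hF ht x]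
    congr 1 with k
    simp
  have := coeff_aeval_C_mul_X (fun k => t k ^ 2) (diagRestrict K d F) α
  rw [hpoly, Finsupp.prod_fintype _ _ fun _ => pow_zero _] at this
  simpa [pow_mul] using (mul_eq_right₀ (mem_support_iff.mp hα)).mp this.symm

theorem apply_eq_of_mem_support_diagRestrict (hF : F ∈ slInvariants K d)
    {α : Fin d →₀ ℕ} (hα : α ∈ (diagRestrict K d F).support) (i j : Fin d) : α i = α j := by
  by_cases hij : i = j
  · rw [hij]
  -- `diag(2 at i, 1/2 at j)` multiplies the monomial `x^α` by `4 ^ (α i - α j)`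
  have := prod_pow_eq_one_of_mem_support_diagRestrict hF hα
    (t := Pi.mulSingle i 2 * Pi.mulSingle j 2⁻¹) (by simp [Finset.prod_mul_distrib])
  simp only [Pi.mul_apply, mul_pow, Finset.prod_mul_distrib] at this
  simp only [Pi.mulSingle_apply, ite_pow, one_pow, Finset.prod_ite_eq', Finset.mem_univ,
    if_true, inv_pow] at this
  rw [mul_inv_eq_one₀ (pow_ne_zero _ two_ne_zero)] at this
  have := Nat.pow_right_injective le_rfl (Nat.cast_injective (R := K) (by push_cast; exact this))
  omega

theorem dvd_and_eq_const_of_mem_support_diagRestrict (hn : F.IsHomogeneous n)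
    (hF : F ∈ slInvariants K d) {α : Fin d →₀ ℕ} (hα : α ∈ (diagRestrict K d F).support) :
    d ∣ n ∧ α = Finsupp.equivFunOnFinite.symm fun _ => n / d := by
  have hdeg : ∑ k, α k = n := by
    by_contra h
    exact mem_support_iff.mp hα (hn.diagRestrict.coeff_eq_zero (by rwa [Finsupp.degree_eq_sum]))
  rcases d.eq_zero_or_pos with rfl | hd
  · exact ⟨by simp [← hdeg], Subsingleton.elim _ _⟩
  have hconst : ∀ k, α k = α ⟨0, hd⟩ := fun k => apply_eq_of_mem_support_diagRestrict hF hα _ _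
  have hn : n = d * α ⟨0, hd⟩ := by simp [← hdeg, hconst]
  refine ⟨⟨_, hn⟩, Finsupp.ext fun k => ?_⟩
  simp [hconst k, hn, hd.ne']

theorem homogeneousSubmodule_inf_slInvariants_eq_bot (h : ¬ d ∣ n) :
    homogeneousSubmodule (SymIdx d) K n ⊓ slInvariants K d = ⊥ := by
  refine (Submodule.eq_bot_iff _).mpr fun F ⟨hn, hF⟩ => eq_zero_of_diagRestrict_eq_zero hF ?_
  refine support_eq_empty.mp (Finset.eq_empty_of_forall_notMem fun α hα => h ?_)
  exact (dvd_and_eq_const_of_mem_support_diagRestrict hn hF hα).1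

theorem injective_coeff_diagRestrict :
    Function.Injective (lcoeff K (Finsupp.equivFunOnFinite.symm fun _ => n / d) ∘ₗ
      (diagRestrict K d).toLinearMap ∘ₗ
        (homogeneousSubmodule (SymIdx d) K n ⊓ slInvariants K d).subtype) := by
  rw [← LinearMap.ker_eq_bot, LinearMap.ker_eq_bot']
  rintro ⟨F, hn, hF⟩ h
  refine Subtype.ext (eq_zero_of_diagRestrict_eq_zero hF (MvPolynomial.ext _ _ fun α => ?_))
  by_contra hα
  obtain ⟨-, rfl⟩ := dvd_and_eq_const_of_mem_support_diagRestrict hn hF (mem_support_iff.mpr hα)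
  exact hα h

theorem finrank_homogeneousSubmodule_inf_slInvariants_mul (m : ℕ) :
    Module.finrank K ↥(homogeneousSubmodule (SymIdx d) K (d * m) ⊓ slInvariants K d) = 1 := by
  have hL := injective_coeff_diagRestrict (K := K) (d := d) (n := d * m)
  have := Module.Finite.of_injective _ hL
  refine le_antisymm (by simpa using LinearMap.finrank_le_finrank_of_injective hL)
    (Submodule.one_le_finrank_iff.mpr ((Submodule.ne_bot_iff _).mpr ⟨symDet K d ^ m, ?_, ?_⟩))
  · exact ⟨(isHomogeneous_symDet K d).pow m, pow_mem_slInvariants (symDet_mem_slInvariants K d) m⟩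
  · intro h
    have := congrArg (aeval (symEntries (1 : Matrix (Fin d) (Fin d) K))) h
    rw [map_pow, aeval_symDet, ofSymEntries_symEntries isSymm_one, det_one, one_pow,
      map_zero] at this
    exact one_ne_zero this

end CharZero

theorem hilbert_series_SLd_invariants_quadratic_forms_general (d : ℕ) (n : ℕ) :
    Module.finrank ℚ
      ↥(MvPolynomial.homogeneousSubmodule (SymIdx d) ℚ n ⊓
        ⨅ (g : Matrix.SpecialLinearGroup (Fin d) ℚ)
          (A : Matrix (Fin d) (Fin d) ℚ) (_ : A.IsSymm),
          LinearMap.ker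
            ((MvPolynomial.aeval (fun p : SymIdx d =>
                ((g : Matrix (Fin d) (Fin d) ℚ)ᵀ * A * (g : Matrix (Fin d) (Fin d) ℚ))
                  p.1.1 p.1.2)).toLinearMap -
              (MvPolynomial.aeval (fun p : SymIdx d =>
                A p.1.1 p.1.2)).toLinearMap)) =
      if d ∣ n then 1 else 0 := by
  change Module.finrank ℚ ↥(homogeneousSubmodule (SymIdx d) ℚ n ⊓ slInvariants ℚ d) = _
  split_ifs with h
  · obtain ⟨m, rfl⟩ := h
    exact finrank_homogeneousSubmodule_inf_slInvariants_mul m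
  · rw [homogeneousSubmodule_inf_slInvariants_eq_bot h, finrank_bot]

/-- **`SL_d`-invariants of quadratic forms.**  Let `SL_d(ℚ)` act on symmetric
`d×d` matrices by `A ↦ gᵀAg`, inducing an action on the polynomial algebra
`ℚ[a_{ij} : i ≤ j]` of polynomial functions on symmetric matrices.  Then for
every `n ≥ 0` the space of homogeneous degree-`n` invariant polynomial functions
has dimension `1` if `d ∣ n` and `0` otherwise; equivalently the Hilbert series
of `K[W(2)]^{SL_d}` is `1/(1 − t^d)`. -/
theorem hilbert_series_SLd_invariants_quadratic_forms (d : ℕ) (hd : 1 ≤ d) (n : ℕ) :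
    Module.finrank ℚ
      ↥(MvPolynomial.homogeneousSubmodule (SymIdx d) ℚ n ⊓
        ⨅ (g : Matrix.SpecialLinearGroup (Fin d) ℚ)
          (A : Matrix (Fin d) (Fin d) ℚ) (_ : A.IsSymm),
          LinearMap.ker
            ((MvPolynomial.aeval (fun p : SymIdx d =>
                ((g : Matrix (Fin d) (Fin d) ℚ)ᵀ * A * (g : Matrix (Fin d) (Fin d) ℚ))
                  p.1.1 p.1.2)).toLinearMap -
              (MvPolynomial.aeval (fun p : SymIdx d =>
                A p.1.1 p.1.2)).toLinearMap)) =
      if d ∣ n then 1 else 0 :=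
  hilbert_series_SLd_invariants_quadratic_forms_general d n
end

section
/- In the field ℚ(x_1,x_2,x_3) of rational functions in three variables over ℚ, the following identity holds: (x_1−x_2)(x_1−x_3)(x_2−x_3) · ( 2·∏_{i=1}^3 (1−x_i)^{-1} + (x_1+x_2+x_3 − 1)·∏_{i=1}^3 (1−x_i)^{-2} ) = Σ_{σ∈S_3} sign(σ) · x_{σ(1)}^2 x_{σ(2)} · h(x_{σ(1)}, x_{σ(1)}x_{σ(2)}, x_{σ(1)}x_{σ(2)}x_{σ(3)}), where h(v_1,v_2,v_3) = 1/(1−v_1) + (v_2 + v_3)/((1−v_1)^2(1−v_2)). (This expresses that h is the multiplicity series M' of the Hilbert series of the relatively free algebra F(U_2(K)) of the algebra of 2×2 upper triangular matrices, and yields the multiplicities m_λ(U_2(K)) = 1 for λ=(λ_1), m_λ = λ_1−λ_2+1 for λ=(λ_1,λ_2) with λ_2>0 and for λ=(λ_1,λ_2,1), and 0 otherwise, in the cocharacter sequence of U_2(K).) -/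
namespace StmtU2K

noncomputable abbrev F3 : Type := FractionRing (MvPolynomial (Fin 3) ℚ)

/-- The candidate multiplicity series `M'(H(F(U₂(K))); v₁, v₂, v₃)` of the Hilbert
series of the relatively free algebra of the `2×2` upper triangular matrices. -/
noncomputable def h (v1 v2 v3 : F3) : F3 :=
  1 / (1 - v1) + (v2 + v3) / ((1 - v1) ^ 2 * (1 - v2))

/-! Clearing the denominators `(1 - xᵢ)²` and `1 - xᵢxⱼ` turns the identity into a polynomial
identity, which is checked by expanding the alternating sum over the six permutations of `S₃`.
All that has to be known about the variables `xᵢ` of `ℚ(x₁,x₂,x₃)` is that these denominators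
do not vanish, which holds because their constant coefficient is `1`. -/

open Equiv Finset MvPolynomial

theorem one_sub_algebraMap_ne_zero {σ R K : Type*} [CommRing R] [Nontrivial R] [CommRing K]
    [Algebra (MvPolynomial σ R) K] [FaithfulSMul (MvPolynomial σ R) K]
    {p : MvPolynomial σ R} (hp : constantCoeff p = 0) :
    1 - algebraMap (MvPolynomial σ R) K p ≠ 0 := by
  have hp' : (1 : MvPolynomial σ R) - p ≠ 0 := fun h₀ => by
    simpa [hp] using congrArg constantCoeff h₀
  rw [← map_one (algebraMap (MvPolynomial σ R) K), ← map_sub]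
  exact (map_ne_zero_iff _ (FaithfulSMul.algebraMap_injective _ K)).mpr hp'

theorem sum_perm_fin_three {M : Type*} [AddCommGroup M] (f : Fin 3 → Fin 3 → Fin 3 → M) :
    ∑ σ : Perm (Fin 3), (Perm.sign σ : ℤ) • f (σ 0) (σ 1) (σ 2) =
      f 0 1 2 - f 1 0 2 - f 2 1 0 - f 0 2 1 + f 1 2 0 + f 2 0 1 := by
  have huniv : (univ : Finset (Perm (Fin 3))) =
      {1, swap 0 1, swap 0 2, swap 1 2, swap 0 1 * swap 1 2, swap 1 2 * swap 0 1} := by decide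
  rw [huniv, sum_insert (by decide), sum_insert (by decide), sum_insert (by decide),
    sum_insert (by decide), sum_insert (by decide), sum_singleton]
  simp only [Perm.sign_one, Units.val_one, Perm.coe_one, id_eq, one_smul, Perm.sign_swap',
    zero_ne_one, ↓reduceIte, Units.val_neg, swap_apply_left, swap_apply_right, ne_eq,
    Fin.reduceEq, not_false_eq_true, swap_apply_of_ne_of_ne, neg_smul, one_ne_zero, Perm.sign_mul,
    mul_neg, mul_one, neg_neg, Perm.coe_mul, Function.comp_apply]
  abel

section Field

variable {K : Type*} [Field K]

/-- Formanek's Hilbert series `2∏(1−xᵢ)⁻¹ + (Σxᵢ − 1)∏(1−xᵢ)⁻²` of `F₃(U₂(K))`. -/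
def hilbertSeriesU2 (x : Fin 3 → K) : K :=
  2 * ((1 - x 0) * (1 - x 1) * (1 - x 2))⁻¹ +
    (x 0 + x 1 + x 2 - 1) * ((1 - x 0) ^ 2 * (1 - x 1) ^ 2 * (1 - x 2) ^ 2)⁻¹

/-- The series `h` over an arbitrary field. -/
def multSeriesU2 (v1 v2 v3 : K) : K :=
  1 / (1 - v1) + (v2 + v3) / ((1 - v1) ^ 2 * (1 - v2))

theorem vandermonde_mul_hilbertSeriesU2 (x : Fin 3 → K) (h₁ : ∀ i, 1 - x i ≠ 0)
    (h₂ : ∀ i j, i ≠ j → 1 - x i * x j ≠ 0) :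
    (x 0 - x 1) * (x 0 - x 2) * (x 1 - x 2) * hilbertSeriesU2 x =
      ∑ σ : Perm (Fin 3), (Perm.sign σ : ℤ) •
        (x (σ 0) ^ 2 * x (σ 1) *
          multSeriesU2 (x (σ 0)) (x (σ 0) * x (σ 1)) (x (σ 0) * x (σ 1) * x (σ 2))) := by
  rw [sum_perm_fin_three fun i j k =>
    x i ^ 2 * x j * multSeriesU2 (x i) (x i * x j) (x i * x j * x k)]
  have := h₁ 0; have := h₁ 1; have := h₁ 2
  have := h₂ 0 1 (by decide); have := h₂ 1 0 (by decide); have := h₂ 0 2 (by decide)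
  have := h₂ 2 0 (by decide); have := h₂ 1 2 (by decide); have := h₂ 2 1 (by decide)
  simp only [hilbertSeriesU2, multSeriesU2]
  field_simp
  ring

end Field

/-- In `ℚ(x₁,x₂,x₃)`:
`(x₁−x₂)(x₁−x₃)(x₂−x₃)·(2·∏(1−xᵢ)⁻¹ + (x₁+x₂+x₃−1)·∏(1−xᵢ)⁻²) =
  Σ_{σ∈S₃} sign(σ)·x_{σ(1)}²x_{σ(2)}·h(x_{σ(1)}, x_{σ(1)}x_{σ(2)}, x_{σ(1)}x_{σ(2)}x_{σ(3)})`,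
where `h(v₁,v₂,v₃) = 1/(1−v₁) + (v₂+v₃)/((1−v₁)²(1−v₂))`; that is, `h` is the
multiplicity series of the Hilbert series of the relatively free algebra
`F(U₂(K))`, giving the multiplicities of the cocharacter sequence of `U₂(K)`. -/
theorem multiplicity_series_FU2K
    (x : Fin 3 → F3)
    (hx : ∀ i, x i = algebraMap (MvPolynomial (Fin 3) ℚ) F3 (MvPolynomial.X i)) :
    (x 0 - x 1) * (x 0 - x 2) * (x 1 - x 2) *
        (2 * ((1 - x 0) * (1 - x 1) * (1 - x 2))⁻¹ +
          (x 0 + x 1 + x 2 - 1) * ((1 - x 0) ^ 2 * (1 - x 1) ^ 2 * (1 - x 2) ^ 2)⁻¹) =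
      ∑ σ : Equiv.Perm (Fin 3), (Equiv.Perm.sign σ : ℤ) •
        (x (σ 0) ^ 2 * x (σ 1) *
          h (x (σ 0)) (x (σ 0) * x (σ 1)) (x (σ 0) * x (σ 1) * x (σ 2))) := by
  have h₁ (i : Fin 3) : 1 - x i ≠ 0 := by
    rw [hx]
    exact one_sub_algebraMap_ne_zero (constantCoeff_X ℚ i)
  have h₂ (i j : Fin 3) : 1 - x i * x j ≠ 0 := by
    rw [hx, hx, ← map_mul]
    exact one_sub_algebraMap_ne_zero (by simp)
  exact vandermonde_mul_hilbertSeriesU2 x h₁ fun i j _ => h₂ i j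

end StmtU2K
end
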